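/- Let d ≥ 2, γ ≥ 0 and τ ≥ 0 be an integer. For j ∈ {1,…,d} define s_j(τ) = Σ_{y ∈ {0,1}^d : y_j = 1} 2 P(Y = y)/(τ + Σ_i y_i + γ). Then for any two distinct indices j ≠ j': s_j(τ) − s_{j'}(τ) = 2 (p_j − p_{j'}) · Σ_{y ∈ {0,1}^d : y_j = y_{j'} = 0} (∏_{i ≠ j, j'} P(Y_i = y_i)) / (τ + 1 + Σ_{i ≠ j, j'} y_i + γ). In particular, the multiplying sum is strictly positive, so s_j(τ) ≥ s_{j'}(τ) if and only if p_j ≥ p_{j'}. -/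

import Mathlib

open Finset

/-- Weight of a binary configuration `y` under independent Bernoulli probabilities `p`:
`P(Y = y) = ∏ⱼ pⱼ^{yⱼ} (1-pⱼ)^{1-yⱼ}`. -/
noncomputable def bw {d : ℕ} (p : Fin d → ℝ) (y : Fin d → Bool) : ℝ :=
  ∏ j, if y j = true then p j else 1 - p j

def cnt {d : ℕ} (y : Fin d → Bool) : ℕ :=
  (Finset.univ.filter (fun j => y j = true)).card

/-- `s_j(τ) = Σ_{y : y_j = 1} 2 P(Y = y)/(τ + Σᵢ yᵢ + γ)`. -/
noncomputable def sfun {d : ℕ} (γ : ℝ) (τ : ℕ) (p : Fin d → ℝ) (j : Fin d) : ℝ :=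
  ∑ y : Fin d → Bool,
    if y j = true then 2 * bw p y / ((τ : ℝ) + (cnt y : ℝ) + γ) else 0

/-- The sum multiplying `2 (p_j - p_{j'})` in the difference `s_j(τ) - s_{j'}(τ)`:
`Σ_{y : y_j = y_{j'} = 0} (∏_{i ≠ j, j'} P(Yᵢ = yᵢ)) / (τ + 1 + Σ_{i ≠ j,j'} yᵢ + γ)`. -/
noncomputable def diffFactor {d : ℕ} (γ : ℝ) (τ : ℕ) (p : Fin d → ℝ) (j j' : Fin d) : ℝ :=
  ∑ y : Fin d → Bool,
    if y j = false ∧ y j' = false then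
      (∏ i ∈ (Finset.univ.erase j).erase j', (if y i = true then p i else 1 - p i)) /
        ((τ : ℝ) + 1 + (cnt y : ℝ) + γ)
    else 0

/-!
Sum over `y ∈ {0,1}^d` by first fixing the coordinates other than `j, j'` (with `y_j = y_{j'} = 0`)
and then running through the four values of `(y_j, y_{j'})`. The configuration with both coordinates
set contributes the same term to `s_j` and to `s_{j'}`, and the one with neither contributes to
neither. The remaining two, `y + e_j` and `y + e_{j'}`, have the same count `cnt y + 1`, and their
weights `p_j (1 - p_{j'}) R` and `(1 - p_j) p_{j'} R` differ by `(p_j - p_{j'}) R`, where `R` is the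
weight of the other coordinates. Positivity of the factor comes from one configuration whose weight
`R` is positive.
-/

open Function

section UpdateSplit

variable {ι M : Type*} [Fintype ι] [DecidableEq ι] [AddCommMonoid M]

theorem Fintype.sum_eq_sum_update_false_true (F : (ι → Bool) → M) (j : ι) :
    ∑ y, F y = ∑ y, if y j = false then F y + F (update y j true) else 0 := by
  have flip_involutive : Involutive fun y : ι → Bool => update y j (!y j) := fun y => by
    ext i; by_cases h : i = j <;> simp [h]
  have reindex : ∑ y, (if y j = true then F y else 0) =
      ∑ y, if y j = false then F (update y j true) else 0 :=
    (Fintype.sum_bijective _ flip_involutive.bijective _ _ fun y => by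
      cases y j <;> simp).symm
  calc ∑ y, F y = ∑ y, ((if y j = false then F y else 0) + if y j = true then F y else 0) :=
        Fintype.sum_congr _ _ fun y => by cases y j <;> simp
    _ = _ := by
        rw [sum_add_distrib, reindex, ← sum_add_distrib]
        exact Fintype.sum_congr _ _ fun y => by split_ifs <;> simp

theorem Fintype.sum_eq_sum_update_false_true₂ (F : (ι → Bool) → M) {j j' : ι} (h : j ≠ j') :
    ∑ y, F y = ∑ y, if y j = false ∧ y j' = false then
      F y + F (update y j true) + F (update y j' true) +
        F (update (update y j true) j' true) else 0 := by
  rw [Fintype.sum_eq_sum_update_false_true F j,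
    Fintype.sum_eq_sum_update_false_true _ j']
  refine Fintype.sum_congr _ _ fun y => ?_
  rw [update_of_ne h]
  by_cases hj : y j = false <;> by_cases hj' : y j' = false <;>
    simp [hj, hj', add_assoc, update_comm h]

end UpdateSplit

theorem Finset.prod_apply_update_of_notMem {ι α M : Type*} [DecidableEq ι] [CommMonoid M]
    {s : Finset ι} (g : ι → α → M) (y : ι → α) {k : ι} (hk : k ∉ s) (b : α) :
    ∏ i ∈ s, g i (update y k b i) = ∏ i ∈ s, g i (y i) :=
  prod_congr rfl fun i hi => by rw [update_of_ne (ne_of_mem_of_not_mem hi hk)]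

section Bernoulli

variable {d : ℕ}

theorem cnt_update_true {y : Fin d → Bool} {j : Fin d} (hy : y j = false) :
    cnt (update y j true) = cnt y + 1 := by
  rw [cnt, cnt, ← card_insert_of_notMem (a := j) (by simp [hy])]
  congr 1
  ext i
  by_cases h : i = j <;> simp [h]

theorem bw_eq_mul_mul_prod_erase_erase (p : Fin d → ℝ) (y : Fin d → Bool) {j j' : Fin d}
    (h : j ≠ j') :
    bw p y = (if y j = true then p j else 1 - p j) * (if y j' = true then p j' else 1 - p j') *
      ∏ i ∈ (univ.erase j).erase j', (if y i = true then p i else 1 - p i) := by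
  let f i := if y i = true then p i else 1 - p i
  rw [mul_assoc, mul_prod_erase _ f (mem_erase.2 ⟨h.symm, mem_univ j'⟩),
    mul_prod_erase _ f (mem_univ j), bw]

theorem bw_update_sub_bw_update (p : Fin d → ℝ) {y : Fin d → Bool} {j j' : Fin d} (h : j ≠ j')
    (hj : y j = false) (hj' : y j' = false) :
    bw p (update y j true) - bw p (update y j' true) =
      (p j - p j') * ∏ i ∈ (univ.erase j).erase j', (if y i = true then p i else 1 - p i) := by
  have hj_notMem : j ∉ (univ.erase j).erase j' := by simp
  have hj'_notMem : j' ∉ (univ.erase j).erase j' := by simp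
  rw [bw_eq_mul_mul_prod_erase_erase p _ h, bw_eq_mul_mul_prod_erase_erase p _ h,
    prod_apply_update_of_notMem (fun i b => if b = true then p i else 1 - p i) y hj_notMem,
    prod_apply_update_of_notMem (fun i b => if b = true then p i else 1 - p i) y hj'_notMem]
  simp only [update_self, update_of_ne h, update_of_ne h.symm, hj, hj', Bool.false_eq_true,
    ↓reduceIte]
  ring

theorem sfun_sub_sfun (γ : ℝ) (τ : ℕ) (p : Fin d → ℝ) {j j' : Fin d} (h : j ≠ j') :
    sfun γ τ p j - sfun γ τ p j' = 2 * (p j - p j') * diffFactor γ τ p j j' := by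
  rw [sfun, sfun, ← sum_sub_distrib, Fintype.sum_eq_sum_update_false_true₂ _ h, diffFactor, mul_sum]
  refine Fintype.sum_congr _ _ fun y => ?_
  by_cases hy : y j = false ∧ y j' = false
  · simp only [hy, and_self, ↓reduceIte, Bool.false_eq_true, update_self, update_of_ne h,
      update_of_ne h.symm, cnt_update_true hy.1, cnt_update_true hy.2, Nat.cast_add, Nat.cast_one,
      sub_self, sub_zero, zero_sub, zero_add, add_zero]
    rw [← sub_eq_add_neg, div_sub_div_same, ← mul_sub, bw_update_sub_bw_update p h hy.1 hy.2]
    ring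
  · simp only [hy, if_false, mul_zero]

theorem diffFactor_pos {γ : ℝ} (hγ : 0 ≤ γ) (τ : ℕ) {p : Fin d → ℝ}
    (hp : ∀ i, p i ∈ Set.Icc (0 : ℝ) 1) (j j' : Fin d) : 0 < diffFactor γ τ p j j' := by
  have factor_nonneg (i : Fin d) (b : Bool) : 0 ≤ if b = true then p i else 1 - p i := by
    split_ifs <;> linarith [(hp i).1, (hp i).2]
  have hden (y : Fin d → Bool) : (0 : ℝ) < τ + 1 + cnt y + γ := by positivity
  -- `y₀ i = 1` exactly where `p i > 0`, so that every factor is positive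
  let y₀ : Fin d → Bool := fun i => decide (i ≠ j ∧ i ≠ j' ∧ 0 < p i)
  refine sum_pos' (fun y _ => ?_) ⟨y₀, mem_univ _, ?_⟩
  · split_ifs
    · exact div_nonneg (prod_nonneg fun i _ => factor_nonneg i (y i)) (hden y).le
    · exact le_rfl
  · rw [if_pos (by simp [y₀])]
    refine div_pos (prod_pos fun i hi => ?_) (hden y₀)
    obtain ⟨hij', hij⟩ : i ≠ j' ∧ i ≠ j := by simpa using hi
    by_cases hpi : 0 < p i
    · simp [y₀, hij, hij', hpi]
    · simp only [y₀, hpi, and_false, decide_false, Bool.false_eq_true, ↓reduceIte, sub_pos]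
      linarith [not_lt.1 hpi]

end Bernoulli

theorem sfun_diff_general {d : ℕ} (γ : ℝ) (hγ : 0 ≤ γ) (τ : ℕ)
    (p : Fin d → ℝ) (hp : ∀ i, p i ∈ Set.Icc (0 : ℝ) 1)
    (j j' : Fin d) (hjj : j ≠ j') :
    sfun γ τ p j - sfun γ τ p j' = 2 * (p j - p j') * diffFactor γ τ p j j' ∧
    0 < diffFactor γ τ p j j' ∧
    (p j' ≤ p j ↔ sfun γ τ p j' ≤ sfun γ τ p j) := by
  have key := sfun_sub_sfun γ τ p hjj
  have hpos := diffFactor_pos hγ τ hp j j'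
  refine ⟨key, hpos, ?_⟩
  rw [← sub_nonneg, ← sub_nonneg (b := sfun γ τ p j'), key, mul_nonneg_iff_of_pos_right hpos,
    mul_nonneg_iff_of_pos_left two_pos]

/-- Difference of the scores `s_j(τ)` for two distinct indices: it factorizes through
`p_j - p_{j'}` times a strictly positive sum, hence `s_j(τ) ≥ s_{j'}(τ) ↔ p_j ≥ p_{j'}`. -/
theorem sfun_diff {d : ℕ} (hd : 2 ≤ d) (γ : ℝ) (hγ : 0 ≤ γ) (τ : ℕ)
    (p : Fin d → ℝ) (hp : ∀ i, p i ∈ Set.Icc (0 : ℝ) 1)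
    (j j' : Fin d) (hjj : j ≠ j') :
    sfun γ τ p j - sfun γ τ p j' = 2 * (p j - p j') * diffFactor γ τ p j j' ∧
    0 < diffFactor γ τ p j j' ∧
    (p j' ≤ p j ↔ sfun γ τ p j' ≤ sfun γ τ p j) :=
  sfun_diff_general γ hγ τ p hp j j' hjj
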